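/- arXiv:1205.1489 — 3 statements merged into one kernel-verified Lean document; each statement's English description precedes it below -/
import Mathlib

section
/- Let μ be a Borel probability measure on ℝ supported on a finite set {t₁,...,tₙ} with masses p₁,...,pₙ, and let G(x) = Σⱼ pⱼ/(tⱼ - x) for real x not in the support. Then for every y > 0, the Lebesgue measure of the set {x ∈ ℝ : G(x) > y} equals 1/y. -/
/-!
Between two consecutive poles, and to the left of the leftmost one, `G` is strictly increasing
(its derivative is `∑ pⱼ / (tⱼ - x)²`) and runs from `-∞` (resp. `0`) up to `+∞` at the pole `tⱼ`,
so it takes the value `y` at exactly one point `cⱼ < tⱼ` there; to the right of all poles `G < 0`.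
Hence `{G > y}` is the disjoint union of the intervals `(cⱼ, tⱼ)`. Clearing denominators, the `cⱼ`
are the `n` roots of the degree `n` polynomial `y ∏ₖ (X - tₖ) + ∑ₖ pₖ ∏_{m ≠ k} (X - tₘ)`, so by
Vieta `∑ cⱼ = ∑ tⱼ - (∑ pⱼ) / y`, and the total length `∑ (tⱼ - cⱼ)` is `1 / y`.
-/

open Filter Topology Set Finset Function MeasureTheory

variable {ι : Type*}

noncomputable def cauchyTransform [Fintype ι] (t q : ι → ℝ) (x : ℝ) : ℝ := ∑ j, q j / (t j - x)

/-- The open interval between the pole `t j` and the nearest pole to its left (unbounded below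
when `t j` is the leftmost pole). -/
def poleGap (t : ι → ℝ) (j : ι) : Set ℝ := {z | z < t j ∧ ∀ k, t k < t j → t k < z}

section Vieta

open Polynomial

theorem coeff_nodal_card_sub_one {κ : Type*} {s : Finset κ} (hs : s.Nonempty) (v : κ → ℝ) :
    (Lagrange.nodal s v).coeff (#s - 1) = -∑ i ∈ s, v i := by
  rw [Lagrange.nodal_eq]
  exact prod_X_sub_C_coeff_card_pred _ _ hs.card_pos

theorem degree_nodal_sub_nodal_lt {κ : Type*} (s : Finset κ) (v w : κ → ℝ) :
    (Lagrange.nodal s v - Lagrange.nodal s w).degree < #s := by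
  rw [← Lagrange.degree_nodal (v := v)]
  refine degree_sub_lt_left (by rw [Lagrange.degree_nodal, Lagrange.degree_nodal])
    Lagrange.nodal_monic.ne_zero ?_
  rw [Lagrange.nodal_monic.leadingCoeff, Lagrange.nodal_monic.leadingCoeff]

variable [Fintype ι]

noncomputable def cauchyNumerator [DecidableEq ι] (t q : ι → ℝ) : ℝ[X] :=
  -∑ k, C (q k) * Lagrange.nodal (univ.erase k) t

section

variable [DecidableEq ι] (t q : ι → ℝ)

theorem eval_cauchyNumerator {x : ℝ} (hx : ∀ j, t j ≠ x) :
    (cauchyNumerator t q).eval x = cauchyTransform t q x * (Lagrange.nodal univ t).eval x := by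
  simp only [cauchyNumerator, eval_neg, eval_finsetSum, eval_mul, eval_C, Lagrange.eval_nodal,
    cauchyTransform, sum_mul, ← sum_neg_distrib]
  refine sum_congr rfl fun k _ => ?_
  rw [← mul_prod_erase univ (fun m => x - t m) (mem_univ k)]
  have : t k - x ≠ 0 := sub_ne_zero.2 (hx k)
  field_simp
  ring

theorem degree_cauchyNumerator_lt : (cauchyNumerator t q).degree < #(univ : Finset ι) := by
  rw [cauchyNumerator, degree_neg, ← mem_degreeLT]
  refine Submodule.sum_mem _ fun k _ => ?_
  rw [← smul_eq_C_mul]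
  refine Submodule.smul_mem _ _ (mem_degreeLT.2 ?_)
  rw [Lagrange.degree_nodal, card_erase_of_mem (mem_univ k)]
  exact_mod_cast Nat.sub_lt (card_pos.2 ⟨k, mem_univ k⟩) zero_lt_one

theorem coeff_cauchyNumerator :
    (cauchyNumerator t q).coeff (#(univ : Finset ι) - 1) = -∑ k, q k := by
  rw [cauchyNumerator, coeff_neg, finsetSum_coeff]
  refine congrArg _ (sum_congr rfl fun k _ => ?_)
  rw [coeff_C_mul, ← card_erase_of_mem (mem_univ k), ← Lagrange.natDegree_nodal (v := t),
    Lagrange.nodal_monic.coeff_natDegree, mul_one]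

end

theorem sum_eq_sum_sub_div_of_cauchyTransform_eq (t q : ι → ℝ) {c : ι → ℝ}
    (hc : Injective c) (hpole : ∀ i j, t j ≠ c i) {y : ℝ} (hy : y ≠ 0)
    (hroot : ∀ i, cauchyTransform t q (c i) = y) :
    ∑ i, c i = ∑ j, t j - (∑ j, q j) / y := by
  classical
  cases isEmpty_or_nonempty ι
  · simp
  have hdeg : (C y * Lagrange.nodal univ t - cauchyNumerator t q -
      C y * Lagrange.nodal univ c).degree < #(univ : Finset ι) := by
    rw [sub_right_comm, ← mul_sub, sub_eq_add_neg]
    exact (degree_add_le _ _).trans_lt (max_lt ((degree_C_mul hy).trans_lt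
      (degree_nodal_sub_nodal_lt _ _ _)) (degree_neg (cauchyNumerator t q) ▸
        degree_cauchyNumerator_lt t q))
  have hQ : C y * Lagrange.nodal univ t - cauchyNumerator t q = C y * Lagrange.nodal univ c := by
    refine eq_of_degree_sub_lt_of_eval_index_eq _ hc.injOn hdeg fun i _ => ?_
    rw [eval_sub, eval_mul, eval_C, eval_cauchyNumerator t q (hpole i), hroot i, eval_mul,
      Lagrange.eval_nodal_at_node (mem_univ i)]
    ring
  have hcoeff := congrArg (coeff · (#(univ : Finset ι) - 1)) hQ
  simp only [coeff_sub, coeff_C_mul, coeff_cauchyNumerator,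
    coeff_nodal_card_sub_one univ_nonempty] at hcoeff
  field_simp
  linarith

end Vieta

theorem tendsto_const_sub_nhdsLT (a : ℝ) : Tendsto (fun x => a - x) (𝓝[<] a) (𝓝[>] 0) :=
  tendsto_nhdsWithin_iff.2 ⟨((continuous_sub_left a).tendsto' a 0 (sub_self a)).mono_left
    nhdsWithin_le_nhds, eventually_nhdsWithin_of_forall fun _ hx => mem_Ioi.2 (sub_pos.2 hx)⟩

theorem tendsto_const_sub_nhdsGT (a : ℝ) : Tendsto (fun x => a - x) (𝓝[>] a) (𝓝[<] 0) :=
  tendsto_nhdsWithin_iff.2 ⟨((continuous_sub_left a).tendsto' a 0 (sub_self a)).mono_left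
    nhdsWithin_le_nhds, eventually_nhdsWithin_of_forall fun _ hx => mem_Iio.2 (sub_neg.2 hx)⟩

section Analysis

variable [Fintype ι] (t q : ι → ℝ)

theorem hasDerivAt_cauchyTransform {x : ℝ} (hx : ∀ j, t j ≠ x) :
    HasDerivAt (cauchyTransform t q) (∑ j, q j / (t j - x) ^ 2) x := by
  refine HasDerivAt.fun_sum fun j _ => ?_
  simpa [div_eq_mul_inv] using
    (((hasDerivAt_id x).const_sub (t j)).fun_inv (sub_ne_zero.2 (hx j))).const_mul (q j)

theorem continuousOn_cauchyTransform {s : Set ℝ} (hs : ∀ x ∈ s, ∀ j, t j ≠ x) :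
    ContinuousOn (cauchyTransform t q) s := fun x hx =>
  (hasDerivAt_cauchyTransform t q (hs x hx)).continuousAt.continuousWithinAt

theorem cauchyTransform_nonpos {x : ℝ} (hq : ∀ j, 0 ≤ q j) (hx : ∀ j, t j < x) :
    cauchyTransform t q x ≤ 0 :=
  sum_nonpos fun j _ => div_nonpos_of_nonneg_of_nonpos (hq j) (sub_nonpos.2 (hx j).le)

theorem tendsto_cauchyTransform_atBot : Tendsto (cauchyTransform t q) atBot (𝓝 0) := by
  have hsub (a : ℝ) : Tendsto (fun x : ℝ => a - x) atBot atTop := by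
    simpa [sub_eq_add_neg] using tendsto_atTop_add_const_left atBot a tendsto_neg_atBot_atTop
  unfold cauchyTransform
  simpa using tendsto_finsetSum univ fun j _ => tendsto_const_nhds.div_atTop (hsub (t j))

theorem cauchyTransform_eq_add_sum_erase [DecidableEq ι] (j : ι) (x : ℝ) :
    cauchyTransform t q x = q j / (t j - x) + ∑ k ∈ univ.erase j, q k / (t k - x) :=
  (add_sum_erase _ _ (mem_univ j)).symm

theorem continuousAt_sum_erase [DecidableEq ι] (ht : Injective t) (j : ι) :
    ContinuousAt (fun x => ∑ k ∈ univ.erase j, q k / (t k - x)) (t j) :=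
  tendsto_finsetSum _ fun _ hk => continuousAt_const.div (continuousAt_const.sub continuousAt_id)
    (sub_ne_zero.2 (ht.ne (ne_of_mem_erase hk)))

theorem tendsto_cauchyTransform_nhdsLT (ht : Injective t) {j : ι} (hq : 0 < q j) :
    Tendsto (cauchyTransform t q) (𝓝[<] t j) atTop := by
  classical
  simp only [funext (cauchyTransform_eq_add_sum_erase t q j), div_eq_mul_inv]
  exact ((tendsto_inv_nhdsGT_zero.comp (tendsto_const_sub_nhdsLT _)).const_mul_atTop hq).atTop_add
    ((continuousAt_sum_erase t q ht j).tendsto.mono_left nhdsWithin_le_nhds)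

theorem tendsto_cauchyTransform_nhdsGT (ht : Injective t) {j : ι} (hq : 0 < q j) :
    Tendsto (cauchyTransform t q) (𝓝[>] t j) atBot := by
  classical
  simp only [funext (cauchyTransform_eq_add_sum_erase t q j), div_eq_mul_inv]
  exact ((tendsto_inv_nhdsLT_zero.comp (tendsto_const_sub_nhdsGT _)).const_mul_atBot hq).atBot_add
    ((continuousAt_sum_erase t q ht j).tendsto.mono_left nhdsWithin_le_nhds)

end Analysis

section PoleGap

variable {t : ι → ℝ} {j : ι} {x : ℝ}

theorem ne_of_mem_poleGap (hx : x ∈ poleGap t j) (k : ι) : t k ≠ x := by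
  rcases lt_or_ge (t k) (t j) with h | h
  · exact (hx.2 k h).ne
  · exact (hx.1.trans_le h).ne'

theorem mem_poleGap_of_mem_Ioo {c : ℝ} (hc : c ∈ poleGap t j) (hx : x ∈ Ioo c (t j)) :
    x ∈ poleGap t j :=
  ⟨hx.2, fun k hk => (hc.2 k hk).trans hx.1⟩

theorem ordConnected_poleGap (t : ι → ℝ) (j : ι) : (poleGap t j).OrdConnected :=
  ⟨fun _ ha _ hb _ hz => ⟨hz.2.trans_lt hb.1, fun k hk => (ha.2 k hk).trans_le hz.1⟩⟩

theorem poleGap_mem_nhdsLT [Finite ι] (t : ι → ℝ) (j : ι) : poleGap t j ∈ 𝓝[<] t j := by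
  refine eventually_mem_nhdsWithin.and (eventually_all.2 fun k => ?_)
  by_cases hk : t k < t j
  · exact ((eventually_gt_nhds hk).filter_mono nhdsWithin_le_nhds).mono fun _ h _ => h
  · exact Eventually.of_forall fun _ h => absurd h hk

theorem exists_mem_poleGap [Fintype ι] (hx : ∀ k, t k ≠ x) (hlt : ∃ k, x < t k) :
    ∃ j, x ∈ poleGap t j := by
  classical
  obtain ⟨j, hj, hmin⟩ := (univ.filter fun k => x < t k).exists_min_image t
    (by simpa [Finset.Nonempty] using hlt)
  refine ⟨j, (mem_filter.1 hj).2, fun k hk => (hx k).lt_of_le ?_⟩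
  by_contra! hxk
  exact (hmin k (mem_filter.2 ⟨mem_univ k, hxk⟩)).not_gt hk

theorem injective_of_mem_poleGap (ht : Injective t) {c : ι → ℝ} (hc : ∀ j, c j ∈ poleGap t j) :
    Injective c := by
  intro i j hij
  by_contra hne
  rcases (ht.ne hne).lt_or_gt with h | h
  · exact ((hc i).1.trans ((hc j).2 i h)).ne hij
  · exact ((hc j).1.trans ((hc i).2 j h)).ne hij.symm

theorem pairwise_disjoint_Ioo_of_mem_poleGap (ht : Injective t) {c : ι → ℝ}
    (hc : ∀ j, c j ∈ poleGap t j) : Pairwise (Disjoint on fun j => Ioo (c j) (t j)) := by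
  have key {i j : ι} (h : t i < t j) : Disjoint (Ioo (c i) (t i)) (Ioo (c j) (t j)) :=
    disjoint_left.2 fun z hzi hzj => lt_irrefl z (hzi.2.trans (((hc j).2 i h).trans hzj.1))
  intro i j hij
  rcases (ht.ne hij).lt_or_gt with h | h
  · exact key h
  · exact (key h).symm

end PoleGap

section OnPoleGap

variable [Fintype ι] {t q : ι → ℝ} {y : ℝ}

theorem strictMonoOn_cauchyTransform_poleGap (hq : ∀ j, 0 < q j) (j : ι) :
    StrictMonoOn (cauchyTransform t q) (poleGap t j) := by
  refine strictMonoOn_of_deriv_pos (ordConnected_poleGap t j).convex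
    (continuousOn_cauchyTransform t q fun _ => ne_of_mem_poleGap) fun x hx => ?_
  have hpole := ne_of_mem_poleGap (interior_subset hx)
  rw [(hasDerivAt_cauchyTransform t q hpole).deriv]
  exact sum_pos (fun k _ => div_pos (hq k) (sq_pos_of_ne_zero (sub_ne_zero.2 (hpole k))))
    ⟨j, mem_univ j⟩

theorem exists_mem_poleGap_cauchyTransform_lt (ht : Injective t) (hq : ∀ j, 0 < q j) (hy : 0 < y)
    (j : ι) : ∃ a ∈ poleGap t j, cauchyTransform t q a < y := by
  classical
  by_cases hpred : (univ.filter fun k => t k < t j).Nonempty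
  · obtain ⟨i, hi, hmax⟩ := (univ.filter fun k => t k < t j).exists_max_image t hpred
    have hij : t i < t j := (mem_filter.1 hi).2
    have hIoo : Ioo (t i) (t j) ⊆ poleGap t j := fun x hx =>
      ⟨hx.2, fun k hk => (hmax k (mem_filter.2 ⟨mem_univ k, hk⟩)).trans_lt hx.1⟩
    exact (((tendsto_cauchyTransform_nhdsGT t q ht (hq i)).eventually_lt_atBot y).and
      (mem_of_superset (Ioo_mem_nhdsGT hij) hIoo)).exists.imp fun _ h => ⟨h.2, h.1⟩
  · have hmin : ∀ k, ¬ t k < t j := fun k hk => hpred ⟨k, mem_filter.2 ⟨mem_univ k, hk⟩⟩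
    exact (((tendsto_cauchyTransform_atBot t q).eventually (gt_mem_nhds hy)).and
      (eventually_lt_atBot (t j))).exists.imp fun _ h =>
        ⟨⟨h.2, fun k hk => absurd hk (hmin k)⟩, h.1⟩

theorem exists_mem_poleGap_cauchyTransform_eq (ht : Injective t) (hq : ∀ j, 0 < q j) (hy : 0 < y)
    (j : ι) : ∃ c ∈ poleGap t j, cauchyTransform t q c = y := by
  obtain ⟨a, ha, hay⟩ := exists_mem_poleGap_cauchyTransform_lt ht hq hy j
  obtain ⟨b, hby, hb⟩ := (((tendsto_cauchyTransform_nhdsLT t q ht (hq j)).eventually_ge_atTop y).and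
    (poleGap_mem_nhdsLT t j)).exists
  exact (ordConnected_poleGap t j).isPreconnected.intermediate_value ha hb
    (continuousOn_cauchyTransform t q fun _ => ne_of_mem_poleGap) ⟨hay.le, hby⟩

theorem setOf_lt_cauchyTransform_eq_iUnion (hq : ∀ j, 0 < q j) (hy : 0 < y) {c : ι → ℝ}
    (hc : ∀ j, c j ∈ poleGap t j) (hcy : ∀ j, cauchyTransform t q (c j) = y) :
    {x | (∀ j, t j ≠ x) ∧ y < cauchyTransform t q x} = ⋃ j, Ioo (c j) (t j) := by
  ext x
  simp only [mem_iUnion]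
  constructor
  · rintro ⟨hx, hyx⟩
    have hlt : ∃ k, x < t k := by
      by_contra! hle
      exact (cauchyTransform_nonpos t q (fun j => (hq j).le)
        fun k => (hle k).lt_of_ne (hx k)).not_gt (hy.trans hyx)
    obtain ⟨j, hj⟩ := exists_mem_poleGap hx hlt
    refine ⟨j, ?_, hj.1⟩
    rwa [← (strictMonoOn_cauchyTransform_poleGap hq j).lt_iff_lt (hc j) hj, hcy]
  · rintro ⟨j, hxj⟩
    have hj := mem_poleGap_of_mem_Ioo (hc j) hxj
    exact ⟨ne_of_mem_poleGap hj, hcy j ▸ strictMonoOn_cauchyTransform_poleGap hq j (hc j) hj hxj.1⟩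

end OnPoleGap

/-- **Boole's theorem** for finitely supported probability measures: if
`G x = ∑ j, p j / (t j - x)` with `p j > 0`, `∑ p j = 1`, then for every `y > 0`
the Lebesgue measure of `{x : G x > y}` equals `1/y`. -/
theorem boole_finite_support (n : ℕ) (t p : Fin n → ℝ)
    (hp : ∀ j, 0 < p j) (hsum : ∑ j, p j = 1) (ht : Function.Injective t)
    (y : ℝ) (hy : 0 < y) :
    volume {x : ℝ | (∀ j, t j ≠ x) ∧ y < ∑ j, p j / (t j - x)} =
      ENNReal.ofReal (1 / y) := by
  choose c hc_gap hc_root using exists_mem_poleGap_cauchyTransform_eq ht hp hy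
  have hc_sum := sum_eq_sum_sub_div_of_cauchyTransform_eq t p (injective_of_mem_poleGap ht hc_gap)
    (fun i => ne_of_mem_poleGap (hc_gap i)) hy.ne' hc_root
  change volume {x | (∀ j, t j ≠ x) ∧ y < cauchyTransform t p x} = _
  rw [setOf_lt_cauchyTransform_eq_iUnion hp hy hc_gap hc_root,
    measure_iUnion (pairwise_disjoint_Ioo_of_mem_poleGap ht hc_gap) fun _ => measurableSet_Ioo]
  simp only [Real.volume_Ioo, tsum_fintype]
  rw [← ENNReal.ofReal_sum_of_nonneg fun j _ => sub_nonneg.2 (hc_gap j).1.le, sum_sub_distrib,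
    hc_sum, hsum, sub_sub_cancel]
end

section
/- Let T be a contraction on a Hilbert space H. Then T is similar to an isometry if and only if inf_{n≥1} inf_{u≠0} ‖Tⁿu‖²/‖u‖² > 0, i.e. there exists δ > 0 with ‖Tⁿu‖ ≥ δ‖u‖ for all n ≥ 1 and all u ∈ H. -/
/-!
For a contraction `T` the limit `ℓ x = lim ‖Tⁿ x‖` exists and satisfies `ℓ (T x) = ℓ x`. By
polarization, `⟪Tⁿ u, Tⁿ v⟫` converges as well, so the operators `(Tⁿ)† Tⁿ` have a weak limit `A`
with `⟪A x, x⟫ = (ℓ x)²`. The bound `δ ‖x‖ ≤ ℓ x` makes `A` positive and invertible, hence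
`R = √A` is invertible with `‖R x‖ = ℓ x`, and `R T R⁻¹` is an isometry. Conversely, conjugating
the powers of an isometry by `S` changes norms by a factor of at most `‖S‖ ‖S⁻¹‖`.
-/

open Filter Topology
open scoped InnerProductSpace

namespace ContinuousLinearMap

section Normed

variable {𝕜 E : Type*} [NontriviallyNormedField 𝕜] [NormedAddCommGroup E] [NormedSpace 𝕜 E]

theorem exists_pos_mul_norm_le_norm_pow_apply_of_conj_isometry (T : E →L[𝕜] E) (S : E ≃L[𝕜] E)
    (hS : ∀ u, ‖S.symm (T (S u))‖ = ‖u‖) :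
    ∃ δ : ℝ, 0 < δ ∧ ∀ (n : ℕ) (u : E), δ * ‖u‖ ≤ ‖(T ^ n) u‖ := by
  have hS_pow : ∀ (n : ℕ) (u : E), ‖S.symm ((T ^ n) (S u))‖ = ‖u‖ := by
    intro n
    induction n with
    | zero => simp
    | succ n ih =>
      intro u
      rw [pow_succ, mul_apply_eq_comp, ← S.apply_symm_apply (T (S u)), ih, hS]
  set C := ‖(S : E →L[𝕜] E)‖ * ‖(S.symm : E →L[𝕜] E)‖ + 1
  refine ⟨C⁻¹, by positivity, fun n u => ?_⟩
  rw [inv_mul_le_iff₀ (by positivity)]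
  calc ‖u‖ = ‖S (S.symm u)‖ := by rw [S.apply_symm_apply]
    _ ≤ ‖(S : E →L[𝕜] E)‖ * ‖S.symm u‖ := (S : E →L[𝕜] E).le_opNorm _
    _ = ‖(S : E →L[𝕜] E)‖ * ‖S.symm ((T ^ n) u)‖ := by
      rw [← hS_pow n (S.symm u), S.apply_symm_apply]
    _ ≤ ‖(S : E →L[𝕜] E)‖ * (‖(S.symm : E →L[𝕜] E)‖ * ‖(T ^ n) u‖) := by
      gcongr
      exact (S.symm : E →L[𝕜] E).le_opNorm _
    _ ≤ C * ‖(T ^ n) u‖ := by rw [← mul_assoc]; gcongr; linarith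

noncomputable def asymptoticNorm (T : E →L[𝕜] E) (x : E) : ℝ := ⨅ n : ℕ, ‖(T ^ n) x‖

variable {T : E →L[𝕜] E}

theorem antitone_norm_pow_apply (hT : ‖T‖ ≤ 1) (x : E) : Antitone fun n : ℕ => ‖(T ^ n) x‖ :=
  antitone_nat_of_succ_le fun n => by
    rw [pow_succ', mul_apply_eq_comp]
    simpa using T.le_of_opNorm_le hT ((T ^ n) x)

theorem tendsto_norm_pow_apply (hT : ‖T‖ ≤ 1) (x : E) :
    Tendsto (fun n : ℕ => ‖(T ^ n) x‖) atTop (𝓝 (T.asymptoticNorm x)) :=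
  tendsto_atTop_ciInf (antitone_norm_pow_apply hT x) ⟨0, by rintro _ ⟨n, rfl⟩; positivity⟩

theorem asymptoticNorm_nonneg (x : E) : 0 ≤ T.asymptoticNorm x :=
  Real.iInf_nonneg fun _ => norm_nonneg _

theorem asymptoticNorm_apply (hT : ‖T‖ ≤ 1) (x : E) :
    T.asymptoticNorm (T x) = T.asymptoticNorm x := by
  refine tendsto_nhds_unique (tendsto_norm_pow_apply hT (T x)) ?_
  refine ((tendsto_norm_pow_apply hT x).comp (tendsto_add_atTop_nat 1)).congr fun n => ?_
  simp only [Function.comp_apply, pow_succ, mul_apply_eq_comp]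

end Normed

section Inner

variable {𝕜 E F : Type*} [RCLike 𝕜] [NormedAddCommGroup E] [InnerProductSpace 𝕜 E]
  [NormedAddCommGroup F] [InnerProductSpace 𝕜 F]

theorem exists_tendsto_inner_apply_of_tendsto_norm {ι : Type*} {l : Filter ι}
    (f : ι → E →L[𝕜] F) (L : E → ℝ) (h : ∀ w, Tendsto (fun i => ‖f i w‖) l (𝓝 (L w)))
    (u v : E) : ∃ c : 𝕜, Tendsto (fun i => ⟪f i u, f i v⟫_𝕜) l (𝓝 c) := by
  have hsq : ∀ w, Tendsto (fun i => (‖f i w‖ : 𝕜) ^ 2) l (𝓝 ((L w : 𝕜) ^ 2)) := fun w =>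
    (((RCLike.continuous_ofReal (K := 𝕜)).tendsto _).comp (h w)).pow 2
  have hI := ((hsq (u - (RCLike.I : 𝕜) • v)).sub (hsq (u + (RCLike.I : 𝕜) • v))).mul_const RCLike.I
  refine ⟨_, (((hsq (u + v)).sub (hsq (u - v))).add hI).div_const 4 |>.congr fun i => ?_⟩
  simp only [map_add, map_sub, map_smul]
  exact (inner_eq_sum_norm_sq_div_four _ _).symm

theorem exists_tendsto_inner_apply_of_norm_le [CompleteSpace E] {ι : Type*} {l : Filter ι}
    [l.NeBot] (A : ι → E →L[𝕜] E) {C : ℝ} (hC : ∀ i, ‖A i‖ ≤ C)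
    (h : ∀ u v, ∃ c : 𝕜, Tendsto (fun i => ⟪A i u, v⟫_𝕜) l (𝓝 c)) :
    ∃ A' : E →L[𝕜] E, ∀ u v, Tendsto (fun i => ⟪A i u, v⟫_𝕜) l (𝓝 ⟪A' u, v⟫_𝕜) := by
  choose B hB using h
  have add_left : ∀ u u' v, B (u + u') v = B u v + B u' v := fun u u' v =>
    tendsto_nhds_unique (hB _ _) <| ((hB u v).add (hB u' v)).congr fun i => by
      simp only [map_add, inner_add_left]
  have smul_left : ∀ (c : 𝕜) u v, B (c • u) v = (starRingEnd 𝕜) c * B u v := fun c u v =>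
    tendsto_nhds_unique (hB _ _) <| ((hB u v).const_mul _).congr fun i => by
      simp only [map_smul, inner_smul_left]
  have add_right : ∀ u v v', B u (v + v') = B u v + B u v' := fun u v v' =>
    tendsto_nhds_unique (hB _ _) <| ((hB u v).add (hB u v')).congr fun i => by
      simp only [inner_add_right]
  have smul_right : ∀ (c : 𝕜) u v, B u (c • v) = c * B u v := fun c u v =>
    tendsto_nhds_unique (hB _ _) <| ((hB u v).const_mul _).congr fun i => by
      simp only [inner_smul_right]
  have bound : ∀ u v, ‖B u v‖ ≤ C * ‖u‖ * ‖v‖ := fun u v =>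
    le_of_tendsto (hB u v).norm <| Eventually.of_forall fun i =>
      (norm_inner_le_norm _ _).trans <| by gcongr; exact (A i).le_of_opNorm_le (hC i) u
  let B' : E →L⋆[𝕜] E →L[𝕜] 𝕜 :=
    (LinearMap.mk₂'ₛₗ (starRingEnd 𝕜) (RingHom.id 𝕜) B add_left smul_left add_right
      smul_right).mkContinuous₂ C bound
  refine ⟨InnerProductSpace.continuousLinearMapOfBilin B', fun u v => ?_⟩
  rw [InnerProductSpace.continuousLinearMapOfBilin_apply]
  exact hB u v

theorem exists_inner_apply_self_eq_asymptoticNorm_sq [CompleteSpace E] {T : E →L[𝕜] E}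
    (hT : ‖T‖ ≤ 1) : ∃ A : E →L[𝕜] E, ∀ x, ⟪A x, x⟫_𝕜 = (T.asymptoticNorm x : 𝕜) ^ 2 := by
  have hpow : ∀ n : ℕ, ‖T ^ n‖ ≤ 1 := fun n =>
    opNorm_le_bound _ zero_le_one fun x => by
      simpa using antitone_norm_pow_apply hT x (Nat.zero_le n)
  obtain ⟨A, hA⟩ := exists_tendsto_inner_apply_of_norm_le (l := atTop)
    (fun n : ℕ => adjoint (T ^ n) ∘L T ^ n) (C := 1)
    (fun n => by
      rw [norm_adjoint_comp_self]
      exact mul_le_one₀ (hpow n) (norm_nonneg _) (hpow n))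
    (fun u v => by
      simpa only [comp_apply, adjoint_inner_left] using
        exists_tendsto_inner_apply_of_tendsto_norm (fun n => T ^ n) _
          (tendsto_norm_pow_apply hT) u v)
  refine ⟨A, fun x => tendsto_nhds_unique (hA x x) ?_⟩
  simp only [comp_apply, adjoint_inner_left, inner_self_eq_norm_sq_to_K]
  exact ((RCLike.continuous_ofReal.tendsto _).comp (tendsto_norm_pow_apply hT x)).pow 2

end Inner

section Complex

variable {H : Type*} [NormedAddCommGroup H] [InnerProductSpace ℂ H] [CompleteSpace H]

theorem exists_equiv_norm_apply_sq_eq_re_inner (A : H →L[ℂ] H) (hA : A.IsPositive)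
    (hA_unit : IsUnit A) : ∃ R : H ≃L[ℂ] H, ∀ x, ‖R x‖ ^ 2 = RCLike.re ⟪A x, x⟫_ℂ := by
  have hA_nonneg : 0 ≤ A := (nonneg_iff_isPositive A).mpr hA
  have hR : IsUnit (CFC.sqrt A) := (CFC.isUnit_sqrt_iff A hA_nonneg).mpr hA_unit
  have hR_sq : adjoint (CFC.sqrt A) ∘L CFC.sqrt A = A := by
    rw [← star_eq_adjoint, (CFC.sqrt_nonneg A).isSelfAdjoint.star_eq, ← mul_def,
      CFC.sqrt_mul_sqrt_self A hA_nonneg]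
  refine ⟨ContinuousLinearEquiv.unitsEquiv ℂ H hR.unit, fun x => ?_⟩
  rw [ContinuousLinearEquiv.unitsEquiv_apply, IsUnit.unit_spec,
    apply_norm_sq_eq_inner_adjoint_left, hR_sq]

theorem exists_conj_isometry_of_mul_norm_le_norm_pow_apply {T : H →L[ℂ] H} (hT : ‖T‖ ≤ 1) {δ : ℝ}
    (hδ : 0 < δ) (hlow : ∀ n : ℕ, 1 ≤ n → ∀ u : H, δ * ‖u‖ ≤ ‖(T ^ n) u‖) :
    ∃ S : H ≃L[ℂ] H, ∀ u : H, ‖S.symm (T (S u))‖ = ‖u‖ := by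
  have hδ_le : ∀ x, δ * ‖x‖ ≤ T.asymptoticNorm x := fun x =>
    ge_of_tendsto (tendsto_norm_pow_apply hT x) (eventually_atTop.2 ⟨1, fun n hn => hlow n hn x⟩)
  obtain ⟨A, hA⟩ := exists_inner_apply_self_eq_asymptoticNorm_sq hT
  have hA_re : ∀ x, RCLike.re ⟪A x, x⟫_ℂ = T.asymptoticNorm x ^ 2 := fun x => by
    rw [hA]; norm_cast
  have hA_pos : A.IsPositive := (isPositive_iff_complex A).mpr fun x =>
    ⟨by rw [hA_re, hA]; push_cast; rfl, hA_re x ▸ sq_nonneg _⟩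
  have hA_unit : IsUnit A := by
    refine isUnit_of_forall_le_norm_inner_map A (c := (δ ^ 2).toNNReal)
      (by positivity) fun x => ?_
    rw [Real.coe_toNNReal _ (sq_nonneg δ), hA, norm_pow, RCLike.norm_ofReal,
      abs_of_nonneg (asymptoticNorm_nonneg x)]
    calc ‖x‖ ^ 2 * δ ^ 2 = (δ * ‖x‖) ^ 2 := by ring
      _ ≤ T.asymptoticNorm x ^ 2 := by gcongr; exact hδ_le x
  obtain ⟨R, hR⟩ := exists_equiv_norm_apply_sq_eq_re_inner A hA_pos hA_unit
  have hR_norm : ∀ x, ‖R x‖ = T.asymptoticNorm x := fun x => by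
    rw [← sq_eq_sq₀ (norm_nonneg _) (asymptoticNorm_nonneg x), hR, hA_re]
  refine ⟨R.symm, fun u => ?_⟩
  rw [R.symm_symm, hR_norm, asymptoticNorm_apply hT, ← hR_norm, R.apply_symm_apply]

end Complex

end ContinuousLinearMap

/-- **B. Sz.-Nagy's similarity criterion.** A contraction `T` on a Hilbert space `H`
is similar to an isometry if and only if there is `δ > 0` with `‖Tⁿu‖ ≥ δ‖u‖` for
all `n ≥ 1` and all `u ∈ H`. -/
theorem szNagy_similar_to_isometry_iff {H : Type*} [NormedAddCommGroup H]
    [InnerProductSpace ℂ H] [CompleteSpace H]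
    (T : H →L[ℂ] H) (hT : ‖T‖ ≤ 1) :
    (∃ S : H ≃L[ℂ] H, ∀ u : H, ‖S.symm (T (S u))‖ = ‖u‖) ↔
      ∃ δ : ℝ, 0 < δ ∧ ∀ n : ℕ, 1 ≤ n → ∀ u : H, δ * ‖u‖ ≤ ‖(T ^ n) u‖ := by
  constructor
  · rintro ⟨S, hS⟩
    obtain ⟨δ, hδ, hlow⟩ := T.exists_pos_mul_norm_le_norm_pow_apply_of_conj_isometry S hS
    exact ⟨δ, hδ, fun n _ => hlow n⟩
  · rintro ⟨δ, hδ, hlow⟩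
    exact T.exists_conj_isometry_of_mul_norm_le_norm_pow_apply hT hδ hlow
end

section
/- Let η > 0, let c₁ ≤ d₁ be real numbers, and let (tₙ)_{n≥1} ⊂ ℝ \ (c₁,d₁) be a decreasing-type sequence with tₙ - t_{n+1} ≥ η for all n with at most one exception (occurring when tₙ ≥ d₁ and t_{n+1} ≤ c₁). Suppose g: ℝ \ (c₁,d₁) → [1,∞) satisfies g(x) ≤ 1 + k/dist(x,[c,d])² for some k > 0 and some interval [c,d] ⊂ (c₁,d₁) with c₁ < c, d < d₁. Then the infinite product Π_{n=1}^∞ g(tₙ) converges to a finite value bounded by Π_{n=0}^∞ (1 + k/dist(d₁+nη,[c,d])²)(1 + k/dist(c₁-nη,[c,d])²), which is finite. -/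
/-!
Let `M` be the first index with `tₘ ≤ c₁`. A step of size `< η` can only jump from `[d₁, ∞)` to
`(-∞, c₁]`, so before `M` the sequence stays in `[d₁, ∞)` with `t_{M-1-j} ≥ d₁ + jη`, and from `M`
on it stays in `(-∞, c₁]` with `t_{M+i} ≤ c₁ - iη`. Since the distance to `[c, d]` grows away from
the interval, `g(t_{M-1-j})` and `g(t_{M+i})` are bounded by the `j`-th right and the `i`-th left
factor of the majorant: this matches the factors of `∏ g(tₙ)` injectively with those of the
majorant. All factors are `≥ 1` and the majorant's logarithms are summable (they are
`O(1/(nη)²)`), so comparing the series of logarithms gives convergence and the bound.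
-/

open Set Metric Function

namespace Real

variable {k c d x y : ℝ}

theorem infDist_Icc_of_right_le (hcd : c ≤ d) (hx : d ≤ x) : infDist x (Icc c d) = x - d := by
  refine le_antisymm ?_ ((le_infDist (nonempty_Icc.2 hcd)).2 fun y hy => ?_)
  · simpa [dist_eq, abs_of_nonneg (sub_nonneg.2 hx)] using
      infDist_le_dist_of_mem (x := x) (right_mem_Icc.2 hcd)
  · rw [dist_eq]
    exact (sub_le_sub_left hy.2 x).trans (le_abs_self _)

theorem infDist_Icc_of_le_left (hcd : c ≤ d) (hx : x ≤ c) : infDist x (Icc c d) = c - x := by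
  refine le_antisymm ?_ ((le_infDist (nonempty_Icc.2 hcd)).2 fun y hy => ?_)
  · simpa [dist_eq, abs_of_nonpos (sub_nonpos.2 hx)] using
      infDist_le_dist_of_mem (x := x) (left_mem_Icc.2 hcd)
  · rw [dist_eq, abs_sub_comm]
    exact (sub_le_sub_right hy.1 x).trans (le_abs_self _)

theorem div_sq_infDist_Icc_le_of_right_lt (hk : 0 ≤ k) (hcd : c ≤ d) (hy : d < y) (hyx : y ≤ x) :
    k / infDist x (Icc c d) ^ 2 ≤ k / infDist y (Icc c d) ^ 2 := by
  rw [infDist_Icc_of_right_le hcd hy.le, infDist_Icc_of_right_le hcd (hy.le.trans hyx)]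
  gcongr

theorem div_sq_infDist_Icc_le_of_lt_left (hk : 0 ≤ k) (hcd : c ≤ d) (hxy : x ≤ y) (hy : y < c) :
    k / infDist x (Icc c d) ^ 2 ≤ k / infDist y (Icc c d) ^ 2 := by
  rw [infDist_Icc_of_le_left hcd hy.le, infDist_Icc_of_le_left hcd (hxy.trans hy.le)]
  gcongr

theorem summable_div_add_mul_sq (k a : ℝ) {η : ℝ} (hη : η ≠ 0) :
    Summable fun n : ℕ => k / (a + n * η) ^ 2 := by
  refine ((summable_one_div_nat_add_rpow (a / η) 2).2 one_lt_two).mul_left (k / η ^ 2)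
    |>.congr fun n => ?_
  have : a + n * η = η * (n + a / η) := by field_simp; ring
  rw [this, rpow_two, sq_abs, mul_pow, div_mul_eq_div_div, mul_one_div]

theorem summable_div_sq_infDist_Icc_add_mul (k : ℝ) {a η : ℝ} (hcd : c ≤ d) (ha : d ≤ a)
    (hη : 0 < η) : Summable fun n : ℕ => k / infDist (a + n * η) (Icc c d) ^ 2 := by
  refine (summable_div_add_mul_sq k (a - d) hη.ne').congr fun n => ?_
  rw [infDist_Icc_of_right_le hcd (le_add_of_le_of_nonneg ha (by positivity))]
  ring_nf

theorem summable_div_sq_infDist_Icc_sub_mul (k : ℝ) {a η : ℝ} (hcd : c ≤ d) (ha : a ≤ c)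
    (hη : 0 < η) : Summable fun n : ℕ => k / infDist (a - n * η) (Icc c d) ^ 2 := by
  refine (summable_div_add_mul_sq k (c - a) hη.ne').congr fun n => ?_
  rw [infDist_Icc_of_le_left hcd ((sub_le_self _ (by positivity)).trans ha)]
  ring_nf

theorem multipliable_and_tprod_le_of_injective {ι κ : Type*} {f : ι → ℝ} {h : κ → ℝ}
    (e : ι → κ) (he : Injective e) (hf : ∀ i, 1 ≤ f i) (hh : ∀ j, 1 ≤ h j)
    (hfh : ∀ i, f i ≤ h (e i)) (hlog : Summable fun j => log (h j)) :
    Multipliable f ∧ ∏' i, f i ≤ ∏' j, h j := by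
  have hf₀ i : 0 < f i := one_pos.trans_le (hf i)
  have hh₀ j : 0 < h j := one_pos.trans_le (hh j)
  have hlog_le i : log (f i) ≤ log (h (e i)) := log_le_log (hf₀ i) (hfh i)
  have hlogf : Summable fun i => log (f i) :=
    (hlog.comp_injective he).of_nonneg_of_le (fun i => log_nonneg (hf i)) hlog_le
  refine ⟨multipliable_of_summable_log hf₀ hlogf, ?_⟩
  rw [← rexp_tsum_eq_tprod hf₀ hlogf, ← rexp_tsum_eq_tprod hh₀ hlog, exp_le_exp]
  exact hlogf.tsum_le_tsum_of_inj e he (fun j _ => log_nonneg (hh j)) hlog_le hlog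

end Real

theorem Multipliable.tprod_sumElim {α β : Type*} [CommMonoid α] [TopologicalSpace α]
    [ContinuousMul α] [T2Space α] {f g : β → α} (hf : Multipliable f) (hg : Multipliable g) :
    ∏' i, Sum.elim f g i = ∏' b, f b * g b := by
  rw [Multipliable.tprod_sum (f := Sum.elim f g) hf hg]
  exact (hf.tprod_mul hg).symm

theorem add_mul_le_of_step {t : ℕ → ℝ} {η : ℝ} {m n : ℕ} (hmn : m ≤ n)
    (h : ∀ i, m ≤ i → i < n → η ≤ t i - t (i + 1)) : t n + (n - m : ℕ) * η ≤ t m := by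
  induction n, hmn using Nat.le_induction with
  | base => simp
  | succ n hmn ih =>
    have := h n hmn n.lt_succ_self
    have := ih fun i hi hin => h i hi (hin.trans n.lt_succ_self)
    rw [Nat.sub_add_comm hmn]
    push_cast
    linarith

section Crossing

variable {t : ℕ → ℝ} {η c₁ d₁ : ℝ}

theorem exists_le_of_step (hη : 0 < η) (hstep : ∀ n, c₁ < t (n + 1) → η ≤ t n - t (n + 1)) :
    ∃ n, t n ≤ c₁ := by
  by_contra! hgt
  obtain ⟨n, hn⟩ := exists_nat_gt ((t 0 - c₁) / η)
  have := add_mul_le_of_step n.zero_le fun i _ _ => hstep i (hgt (i + 1))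
  rw [div_lt_iff₀ hη] at hn
  simp only [Nat.sub_zero] at this
  linarith [hgt n]

theorem exists_crossing (hη : 0 < η) (hcd₁ : c₁ < d₁) (ht : ∀ n, t n ∉ Ioo c₁ d₁)
    (hstep : ∀ n, η ≤ t n - t (n + 1) ∨ (d₁ ≤ t n ∧ t (n + 1) ≤ c₁)) :
    ∃ M, (∀ n < M, d₁ + (M - 1 - n : ℕ) * η ≤ t n) ∧
      ∀ n, M ≤ n → t n ≤ c₁ - (n - M : ℕ) * η := by
  classical
  have step_of_gt n (h : c₁ < t (n + 1)) : η ≤ t n - t (n + 1) :=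
    (hstep n).resolve_right fun h' => h.not_ge h'.2
  have step_of_le n (h : t n ≤ c₁) : η ≤ t n - t (n + 1) :=
    (hstep n).resolve_right fun h' => hcd₁.not_ge (h'.1.trans h)
  have hex := exists_le_of_step hη step_of_gt
  obtain ⟨M, hM, hgt⟩ : ∃ M, t M ≤ c₁ ∧ ∀ i < M, c₁ < t i :=
    ⟨Nat.find hex, Nat.find_spec hex, fun i hi => not_le.1 (Nat.find_min hex hi)⟩
  refine ⟨M, fun n hn => ?_, fun n hn => ?_⟩
  · have hlast : d₁ ≤ t (M - 1) := by
      by_contra! h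
      exact ht _ ⟨hgt _ (by omega), h⟩
    have := add_mul_le_of_step (t := t) (Nat.le_sub_one_of_lt hn) fun i _ hi =>
      step_of_gt i (hgt _ (by omega))
    linarith
  · induction n, hn using Nat.le_induction with
    | base => simpa using hM
    | succ n hn ih =>
      have := step_of_le n (ih.trans (sub_le_self _ (by positivity)))
      rw [Nat.sub_add_comm hn]
      push_cast
      linarith

end Crossing

def crossingIndex (M n : ℕ) : ℕ ⊕ ℕ := if n < M then .inl (M - 1 - n) else .inr (n - M)

theorem crossingIndex_injective (M : ℕ) : Injective (crossingIndex M) := by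
  intro m n h
  unfold crossingIndex at h
  split_ifs at h <;> simp at h <;> omega

/-- **Key product estimate.** If `(tₙ) ⊂ ℝ \ (c₁,d₁)` satisfies `tₙ - t_{n+1} ≥ η`
for all `n` with at most one exception (occurring when `tₙ ≥ d₁` and `t_{n+1} ≤ c₁`),
and `g : ℝ \ (c₁,d₁) → [1,∞)` satisfies `g(x) ≤ 1 + k/dist(x,[c,d])²` with
`[c,d] ⊂ (c₁,d₁)`, then `∏ₙ g(tₙ)` converges to a finite value bounded by
`∏ₙ (1 + k/dist(d₁+nη,[c,d])²)(1 + k/dist(c₁-nη,[c,d])²)`, which is finite. -/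
theorem product_estimate (η c₁ c d d₁ k : ℝ)
    (hη : 0 < η) (hc₁ : c₁ < c) (hcd : c ≤ d) (hd₁ : d < d₁) (hk : 0 < k)
    (t : ℕ → ℝ) (ht : ∀ n, t n ∉ Ioo c₁ d₁)
    (hstep : ∃ N : ℕ, ∀ n, η ≤ t n - t (n + 1) ∨ (n = N ∧ d₁ ≤ t n ∧ t (n + 1) ≤ c₁))
    (g : ℝ → ℝ) (hg1 : ∀ x ∉ Ioo c₁ d₁, 1 ≤ g x)
    (hg2 : ∀ x ∉ Ioo c₁ d₁, g x ≤ 1 + k / (Metric.infDist x (Icc c d)) ^ 2) :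
    Multipliable (fun n : ℕ => g (t n)) ∧
    Multipliable (fun n : ℕ =>
      (1 + k / (Metric.infDist (d₁ + n * η) (Icc c d)) ^ 2) *
      (1 + k / (Metric.infDist (c₁ - n * η) (Icc c d)) ^ 2)) ∧
    (∏' n : ℕ, g (t n)) ≤
      ∏' n : ℕ,
        (1 + k / (Metric.infDist (d₁ + n * η) (Icc c d)) ^ 2) *
        (1 + k / (Metric.infDist (c₁ - n * η) (Icc c d)) ^ 2) := by
  obtain ⟨_, hN⟩ := hstep
  set A : ℕ → ℝ := fun n => 1 + k / infDist (d₁ + n * η) (Icc c d) ^ 2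
  set B : ℕ → ℝ := fun n => 1 + k / infDist (c₁ - n * η) (Icc c d) ^ 2
  have hA := Real.summable_div_sq_infDist_Icc_add_mul k hcd hd₁.le hη
  have hB := Real.summable_div_sq_infDist_Icc_sub_mul k hcd hc₁.le hη
  have hAB j : 1 ≤ Sum.elim A B j := by
    rcases j with j | j <;> exact le_add_of_nonneg_right (by positivity)
  obtain ⟨M, hhead, htail⟩ :=
    exists_crossing hη (by linarith) ht fun n => (hN n).imp_right And.right
  have hbound n : g (t n) ≤ Sum.elim A B (crossingIndex M n) := by
    refine (hg2 _ (ht n)).trans ?_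
    unfold crossingIndex
    split_ifs with hn
    · exact add_le_add_right (Real.div_sq_infDist_Icc_le_of_right_lt hk.le hcd
        (lt_add_of_lt_of_nonneg hd₁ (by positivity)) (hhead n hn)) 1
    · exact add_le_add_right (Real.div_sq_infDist_Icc_le_of_lt_left hk.le hcd
        (htail n (not_lt.1 hn)) ((sub_le_self _ (by positivity)).trans_lt hc₁)) 1
  have hlog : Summable fun j => Real.log (Sum.elim A B j) :=
    .sum _ (Real.summable_log_one_add_of_summable hA) (Real.summable_log_one_add_of_summable hB)
  obtain ⟨hmul, hle⟩ := Real.multipliable_and_tprod_le_of_injective _ (crossingIndex_injective M)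
    (fun n => hg1 _ (ht n)) hAB hbound hlog
  have hAm : Multipliable A := Real.multipliable_one_add_of_summable hA
  have hBm : Multipliable B := Real.multipliable_one_add_of_summable hB
  exact ⟨hmul, hAm.mul hBm, hle.trans_eq (hAm.tprod_sumElim hBm)⟩
end
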